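/- arXiv:2304.05001 — 14 statements merged into one kernel-verified Lean document; each statement's English description precedes it below -/
import Mathlib

section
/- Let (A, ·) be a Zinbiel algebra, D a derivation of (A, ·), and ξ a complex scalar. Define a ◁ b := D(b)·a + ξ b·a and a ▷ b := a·D(b) + ξ a·b. Then (A, ◁, ▷) is a pre-Novikov algebra. -/
/-- A Zinbiel algebra with a derivation yields a pre-Novikov algebra via
    a ◁ b := D(b)·a + ξ b·a and a ▷ b := a·D(b) + ξ a·b. -/
theorem zinbiel_derivation_gives_preNovikov
    {A : Type*} [AddCommGroup A] [Module ℂ A]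
    (mul : A →ₗ[ℂ] A →ₗ[ℂ] A) (D : A →ₗ[ℂ] A) (ξ : ℂ)
    (hZ : ∀ a b c : A, mul a (mul b c) = mul (mul a b + mul b a) c)
    (hD : ∀ a b : A, D (mul a b) = mul (D a) b + mul a (D b))
    (lhd rhd : A → A → A)
    (hl : ∀ a b : A, lhd a b = mul (D b) a + ξ • mul b a)
    (hr : ∀ a b : A, rhd a b = mul a (D b) + ξ • mul a b) :
    (∀ a b c : A, rhd a (rhd b c)
        = rhd (rhd a b + lhd a b) c + rhd b (rhd a c) - rhd (rhd b a + lhd b a) c) ∧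
    (∀ a b c : A, rhd a (lhd b c)
        = lhd (rhd a b) c + lhd b (lhd a c + rhd a c) - lhd (lhd b a) c) ∧
    (∀ a b c : A, rhd (lhd a b + rhd a b) c = lhd (rhd a c) b) ∧
    (∀ a b c : A, lhd (lhd a b) c = lhd (lhd a c) b) := by
  refine ⟨fun a b c => ?_, fun a b c => ?_, fun a b c => ?_, fun a b c => ?_⟩ <;>
  · simp only [hl, hr, hD, map_add, map_smul, LinearMap.add_apply, LinearMap.smul_apply,
      smul_add, hZ]
    module
end

section
/- Let (A, ◁, ▷) be a pre-Novikov algebra. Then the operation a ∗ b := a◁b + a▷b makes (A, ∗) a Novikov algebra. -/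
/-- The sum of the two operations of a pre-Novikov algebra is a Novikov product. -/
theorem preNovikov_sum_is_Novikov
    {A : Type*} [AddCommGroup A] [Module ℂ A]
    (lhd rhd : A →ₗ[ℂ] A →ₗ[ℂ] A)
    (hpn1 : ∀ a b c : A, rhd a (rhd b c)
        = rhd (rhd a b + lhd a b) c + rhd b (rhd a c) - rhd (rhd b a + lhd b a) c)
    (hpn2 : ∀ a b c : A, rhd a (lhd b c)
        = lhd (rhd a b) c + lhd b (lhd a c + rhd a c) - lhd (lhd b a) c)
    (hpn3 : ∀ a b c : A, rhd (lhd a b + rhd a b) c = lhd (rhd a c) b)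
    (hpn4 : ∀ a b c : A, lhd (lhd a b) c = lhd (lhd a c) b)
    (s : A → A → A)
    (hs : ∀ a b : A, s a b = lhd a b + rhd a b) :
    (∀ a b c : A, s (s a b) c - s a (s b c) = s (s b a) c - s b (s a c)) ∧
    (∀ a b c : A, s (s a b) c = s (s a c) b) := by
  constructor
  · intro a b c
    simp only [hs, map_add, LinearMap.add_apply]
    rw [hpn1 a b c, hpn2 a b c, hpn2 b a c]
    simp only [map_add, LinearMap.add_apply, map_sub, LinearMap.sub_apply]
    abel
  · intro a b c
    simp only [hs, map_add, LinearMap.add_apply]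
    have h1 := hpn3 a b c
    have h2 := hpn3 a c b
    simp only [map_add, LinearMap.add_apply] at h1 h2
    rw [h1, h2, hpn4 a b c]
    abel
end

section
/- Let (A, ◁, ▷) be a pre-Novikov algebra with associated Novikov algebra product a∗b = a◁b + a▷b. Define L_▷(a)(b) = a▷b and R_◁(a)(b) = b◁a. Then (A, L_▷, R_◁) is a representation of the Novikov algebra (A, ∗). -/
/-- For a pre-Novikov algebra, (A, L_▷, R_◁) is a representation of the
    associated Novikov algebra (A, ∗) with a∗b = a◁b + a▷b. -/
theorem preNovikov_gives_representation
    {A : Type*} [AddCommGroup A] [Module ℂ A]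
    (lhd rhd : A →ₗ[ℂ] A →ₗ[ℂ] A)
    (hpn1 : ∀ a b c : A, rhd a (rhd b c)
        = rhd (rhd a b + lhd a b) c + rhd b (rhd a c) - rhd (rhd b a + lhd b a) c)
    (hpn2 : ∀ a b c : A, rhd a (lhd b c)
        = lhd (rhd a b) c + lhd b (lhd a c + rhd a c) - lhd (lhd b a) c)
    (hpn3 : ∀ a b c : A, rhd (lhd a b + rhd a b) c = lhd (rhd a c) b)
    (hpn4 : ∀ a b c : A, lhd (lhd a b) c = lhd (lhd a c) b)
    (s : A → A → A)
    (hs : ∀ a b : A, s a b = lhd a b + rhd a b) :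
    (∀ a b v : A, rhd (s a b - s b a) v = rhd a (rhd b v) - rhd b (rhd a v)) ∧
    (∀ a b v : A, rhd a (lhd v b) - lhd (rhd a v) b = lhd v (s a b) - lhd (lhd v a) b) ∧
    (∀ a b v : A, rhd (s a b) v = lhd (rhd a v) b) ∧
    (∀ a b v : A, lhd (lhd v b) a = lhd (lhd v a) b) := by
  refine ⟨?_, ?_, ?_, ?_⟩
  · intro a b v
    have h := hpn1 a b v
    simp only [hs, map_sub, LinearMap.sub_apply, map_add, LinearMap.add_apply] at *
    rw [h]; abel
  · intro a b v
    have h := hpn2 a v b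
    simp only [hs, map_add, LinearMap.add_apply] at *
    rw [h]; abel
  · intro a b v
    rw [hs]
    exact hpn3 a b v
  · intro a b v
    exact hpn4 v b a
end

section
/- Let (A, ◁, ▷, ∘) be a pre-Gel'fand-Dorfman algebra. Define a∗b := a◁b + a▷b and [a,b] := a∘b − b∘a. Then (A, ∗, [·,·]) is a Gel'fand-Dorfman algebra; in particular, [a∗b, c] − [a∗c, b] + [a,b]∗c − [a,c]∗b − a∗[b,c] = 0 for all a,b,c. -/
/-- A pre-Gel'fand-Dorfman algebra yields a Gel'fand-Dorfman algebra via
    a∗b := a◁b + a▷b and [a,b] := a∘b − b∘a. -/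
theorem preGD_gives_GD
    {A : Type*} [AddCommGroup A] [Module ℂ A]
    (lhd rhd circ : A →ₗ[ℂ] A →ₗ[ℂ] A)
    (hpn1 : ∀ a b c : A, rhd a (rhd b c)
        = rhd (rhd a b + lhd a b) c + rhd b (rhd a c) - rhd (rhd b a + lhd b a) c)
    (hpn2 : ∀ a b c : A, rhd a (lhd b c)
        = lhd (rhd a b) c + lhd b (lhd a c + rhd a c) - lhd (lhd b a) c)
    (hpn3 : ∀ a b c : A, rhd (lhd a b + rhd a b) c = lhd (rhd a c) b)
    (hpn4 : ∀ a b c : A, lhd (lhd a b) c = lhd (lhd a c) b)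
    (hls : ∀ a b c : A, circ (circ a b) c - circ a (circ b c)
        = circ (circ b a) c - circ b (circ a c))
    (hcomp1 : ∀ a b c : A, lhd c (circ a b - circ b a) - circ a (lhd c b)
        - lhd (circ b c) a = -(circ b (lhd c a)) - lhd (circ a c) b)
    (hcomp2 : ∀ a b c : A, rhd (circ a b - circ b a) c + circ (lhd a b + rhd a b) c
        = rhd a (circ b c) - circ b (rhd a c) + lhd (circ a c) b)
    (s br : A → A → A)
    (hs : ∀ a b : A, s a b = lhd a b + rhd a b)
    (hbr : ∀ a b : A, br a b = circ a b - circ b a) :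
    (∀ a b c : A, s (s a b) c - s a (s b c) = s (s b a) c - s b (s a c)) ∧
    (∀ a b c : A, s (s a b) c = s (s a c) b) ∧
    (∀ a b : A, br a b = - br b a) ∧
    (∀ a b c : A, br (br a b) c + br (br b c) a + br (br c a) b = 0) ∧
    (∀ a b c : A, br (s a b) c - br (s a c) b + s (br a b) c - s (br a c) b
        - s a (br b c) = 0) := by
  refine ⟨?_, ?_, ?_, ?_, ?_⟩
  · intro a b c
    have h1 := hpn1 a b c
    have h2 := hpn2 a b c
    have h2' := hpn2 b a c
    simp only [map_add, map_sub, LinearMap.add_apply, LinearMap.sub_apply] at h1 h2 h2'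
    simp only [hs, map_add, map_sub, LinearMap.add_apply, LinearMap.sub_apply]
    linear_combination (norm := module) -h1 - h2 + h2'
  · intro a b c
    have h3 := hpn3 a b c
    have h3' := hpn3 a c b
    have h4 := hpn4 a b c
    simp only [map_add, map_sub, LinearMap.add_apply, LinearMap.sub_apply] at h3 h3'
    simp only [hs, map_add, map_sub, LinearMap.add_apply, LinearMap.sub_apply]
    linear_combination (norm := module) h3 - h3' + h4
  · intro a b
    simp only [hbr]
    abel
  · intro a b c
    have g1 := hls a b c
    have g2 := hls b c a
    have g3 := hls c a b
    simp only [hbr, map_add, map_sub, LinearMap.add_apply, LinearMap.sub_apply]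
    linear_combination (norm := module) g1 + g2 + g3
  · intro a b c
    have k1 := hcomp2 a b c
    have k2 := hcomp2 a c b
    have k3 := hcomp1 c b a
    simp only [map_add, map_sub, LinearMap.add_apply, LinearMap.sub_apply] at k1 k2 k3
    simp only [hs, hbr, map_add, map_sub, LinearMap.add_apply, LinearMap.sub_apply]
    linear_combination (norm := module) k1 - k2 + k3
end

section
/- Let (A, ◁, ▷) be a pre-Novikov algebra and k ∈ ℂ. Define a∘b := k(a▷b − b◁a). Then (A, ∘) is a left-symmetric algebra, i.e. (a∘b)∘c − a∘(b∘c) = (b∘a)∘c − b∘(a∘c) for all a,b,c ∈ A. -/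
/-- For a pre-Novikov algebra and k ∈ ℂ, a∘b := k(a▷b − b◁a) is left-symmetric. -/
theorem preNovikov_k_gives_leftSymmetric
    {A : Type*} [AddCommGroup A] [Module ℂ A]
    (lhd rhd : A →ₗ[ℂ] A →ₗ[ℂ] A) (k : ℂ)
    (hpn1 : ∀ a b c : A, rhd a (rhd b c)
        = rhd (rhd a b + lhd a b) c + rhd b (rhd a c) - rhd (rhd b a + lhd b a) c)
    (hpn2 : ∀ a b c : A, rhd a (lhd b c)
        = lhd (rhd a b) c + lhd b (lhd a c + rhd a c) - lhd (lhd b a) c)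
    (hpn3 : ∀ a b c : A, rhd (lhd a b + rhd a b) c = lhd (rhd a c) b)
    (hpn4 : ∀ a b c : A, lhd (lhd a b) c = lhd (lhd a c) b)
    (circ : A → A → A)
    (hc : ∀ a b : A, circ a b = k • (rhd a b - lhd b a)) :
    ∀ a b c : A, circ (circ a b) c - circ a (circ b c)
        = circ (circ b a) c - circ b (circ a c) := by
  intro a b c
  have h1 : ∀ a b c : A, rhd a (rhd b c)
      = rhd (rhd a b) c + rhd (lhd a b) c + rhd b (rhd a c)
        - rhd (rhd b a) c - rhd (lhd b a) c := by
    intro a b c; rw [hpn1 a b c]; simp only [map_add, LinearMap.add_apply]; abel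
  have h2 : ∀ a b c : A, rhd a (lhd b c)
      = lhd (rhd a b) c + lhd b (lhd a c) + lhd b (rhd a c) - lhd (lhd b a) c := by
    intro a b c; rw [hpn2 a b c]; simp only [map_add]; abel
  simp only [hc, map_smul, map_sub, map_add, LinearMap.smul_apply, LinearMap.sub_apply,
    LinearMap.add_apply, smul_sub]
  linear_combination (norm := module) (k*k) • (h2 a c b) - (k*k) • (h2 b c a)
    - (k*k) • (h1 a b c)
end

section
/- Let (A, ◁, ▷) be a pre-Novikov algebra and k ∈ ℂ. Define a∘b := k(a▷b − b◁a). Then (A, ◁, ▷, ∘) is a pre-Gel'fand-Dorfman algebra, i.e. the two compatibility conditions c◁(a∘b − b∘a) − a∘(c◁b) − (b∘c)◁a = −b∘(c◁a) − (a∘c)◁b and (a∘b − b∘a)▷c + (a◁b + a▷b)∘c = a▷(b∘c) − b∘(a▷c) + (a∘c)◁b hold, in addition to (A,∘) being left-symmetric. -/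
/-- For a pre-Novikov algebra and k ∈ ℂ, a∘b := k(a▷b − b◁a) makes
    (A, ◁, ▷, ∘) a pre-Gel'fand-Dorfman algebra. -/
theorem preNovikov_k_gives_preGD
    {A : Type*} [AddCommGroup A] [Module ℂ A]
    (lhd rhd : A →ₗ[ℂ] A →ₗ[ℂ] A) (k : ℂ)
    (hpn1 : ∀ a b c : A, rhd a (rhd b c)
        = rhd (rhd a b + lhd a b) c + rhd b (rhd a c) - rhd (rhd b a + lhd b a) c)
    (hpn2 : ∀ a b c : A, rhd a (lhd b c)
        = lhd (rhd a b) c + lhd b (lhd a c + rhd a c) - lhd (lhd b a) c)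
    (hpn3 : ∀ a b c : A, rhd (lhd a b + rhd a b) c = lhd (rhd a c) b)
    (hpn4 : ∀ a b c : A, lhd (lhd a b) c = lhd (lhd a c) b)
    (circ : A → A → A)
    (hc : ∀ a b : A, circ a b = k • (rhd a b - lhd b a)) :
    (∀ a b c : A, circ (circ a b) c - circ a (circ b c)
        = circ (circ b a) c - circ b (circ a c)) ∧
    (∀ a b c : A, lhd c (circ a b - circ b a) - circ a (lhd c b)
        - lhd (circ b c) a = -(circ b (lhd c a)) - lhd (circ a c) b) ∧
    (∀ a b c : A, rhd (circ a b - circ b a) c + circ (lhd a b + rhd a b) c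
        = rhd a (circ b c) - circ b (rhd a c) + lhd (circ a c) b) := by
  refine ⟨fun a b c => ?_, fun a b c => ?_, fun a b c => ?_⟩
  · have e1 := hpn1 a b c
    have e2 := hpn2 a c b
    have e3 := hpn2 b c a
    simp only [map_add, LinearMap.add_apply] at e1 e2 e3
    simp only [hc, map_sub, map_smul, map_add, LinearMap.sub_apply, LinearMap.smul_apply,
      LinearMap.add_apply, smul_sub, smul_add]
    linear_combination (norm := module) (-(k*k)) • e1 + (k*k) • e2 + (-(k*k)) • e3
  · have e2 := hpn2 a c b
    have e3 := hpn2 b c a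
    have e4 := hpn4 c a b
    simp only [map_add, LinearMap.add_apply] at e2 e3 e4
    simp only [hc, map_sub, map_smul, map_add, LinearMap.sub_apply, LinearMap.smul_apply,
      LinearMap.add_apply, smul_sub, smul_add]
    linear_combination (norm := module) (-k) • e2 + k • e3 + (-k) • e4
  · have e1 := hpn1 a b c
    have e2 := hpn2 a c b
    have e3 := hpn3 a b c
    simp only [map_add, LinearMap.add_apply] at e1 e2 e3
    simp only [hc, map_sub, map_smul, map_add, LinearMap.sub_apply, LinearMap.smul_apply,
      LinearMap.add_apply, smul_sub, smul_add]
    linear_combination (norm := module) (-k) • e1 + k • e2 + k • e3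
end

section
/- Let (A, ·, ∘) be a left-symmetric Poisson algebra. Define a◁b := a·b and a▷b := 0. Then (A, ◁, ▷, ∘) is a pre-Gel'fand-Dorfman algebra. -/
/-- A left-symmetric Poisson algebra gives a pre-Gel'fand-Dorfman algebra
    with a◁b := a·b and a▷b := 0. -/
theorem leftSymmetricPoisson_gives_preGD
    {A : Type*} [AddCommGroup A] [Module ℂ A]
    (mul circ : A →ₗ[ℂ] A →ₗ[ℂ] A)
    (hcomm : ∀ a b : A, mul a b = mul b a)
    (hassoc : ∀ a b c : A, mul (mul a b) c = mul a (mul b c))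
    (hls : ∀ a b c : A, circ (circ a b) c - circ a (circ b c)
        = circ (circ b a) c - circ b (circ a c))
    (hlp1 : ∀ a b c : A, circ (mul a b) c = mul a (circ b c))
    (hlp2 : ∀ a b c : A, mul (circ a b) c - circ a (mul b c)
        = mul (circ b a) c - circ b (mul a c))
    (lhd rhd : A → A → A)
    (hl : ∀ a b : A, lhd a b = mul a b)
    (hr : ∀ a b : A, rhd a b = 0) :
    (∀ a b c : A, rhd a (rhd b c)
        = rhd (rhd a b + lhd a b) c + rhd b (rhd a c) - rhd (rhd b a + lhd b a) c) ∧
    (∀ a b c : A, rhd a (lhd b c)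
        = lhd (rhd a b) c + lhd b (lhd a c + rhd a c) - lhd (lhd b a) c) ∧
    (∀ a b c : A, rhd (lhd a b + rhd a b) c = lhd (rhd a c) b) ∧
    (∀ a b c : A, lhd (lhd a b) c = lhd (lhd a c) b) ∧
    (∀ a b c : A, lhd c (circ a b - circ b a) - circ a (lhd c b)
        - lhd (circ b c) a = -(circ b (lhd c a)) - lhd (circ a c) b) ∧
    (∀ a b c : A, rhd (circ a b - circ b a) c + circ (lhd a b + rhd a b) c
        = rhd a (circ b c) - circ b (rhd a c) + lhd (circ a c) b) := by
  have key : ∀ x y z : A, mul x (circ y z) = mul y (circ x z) := fun x y z => by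
    rw [← hlp1, hcomm x y, hlp1]
  refine ⟨?_, ?_, ?_, ?_, ?_, ?_⟩
  · intro a b c
    simp [hr]
  · intro a b c
    simp only [hl, hr, add_zero]
    simp only [map_zero, LinearMap.zero_apply, zero_add]
    rw [hassoc b a c, sub_self]
  · intro a b c
    simp only [hl, hr, add_zero]
    simp [map_zero]
  · intro a b c
    simp only [hl]
    rw [hassoc a b c, hassoc a c b, hcomm b c]
  · intro a b c
    simp only [hl, map_sub]
    have h1 := hlp2 a b c
    rw [hcomm b c, hcomm a c] at h1
    have hA := eq_add_of_sub_eq h1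
    have k2 : mul (circ b c) a = mul (circ a c) b := by
      rw [hcomm (circ b c) a, key a b c, hcomm b (circ a c)]
    rw [hcomm c (circ a b), hcomm c (circ b a), hA, k2]
    abel
  · intro a b c
    simp only [hl, hr, add_zero, zero_add, sub_zero]
    simp only [map_zero, zero_sub]
    rw [hlp1 a b c, key a b c, hcomm b (circ a c)]
    abel
end

section
/- Let (V, ◁, ▷) be a simple pre-Novikov algebra (nontrivial and with no proper ideals). Then the identity a▷b = −b◁a cannot hold for all a, b ∈ V. -/
/-- In a simple pre-Novikov algebra, the identity a▷b = −b◁a cannot hold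
    for all a, b. -/
theorem simple_preNovikov_not_skew
    {V : Type*} [AddCommGroup V] [Module ℂ V]
    (lhd rhd : V →ₗ[ℂ] V →ₗ[ℂ] V)
    (hpn1 : ∀ a b c : V, rhd a (rhd b c)
        = rhd (rhd a b + lhd a b) c + rhd b (rhd a c) - rhd (rhd b a + lhd b a) c)
    (hpn2 : ∀ a b c : V, rhd a (lhd b c)
        = lhd (rhd a b) c + lhd b (lhd a c + rhd a c) - lhd (lhd b a) c)
    (hpn3 : ∀ a b c : V, rhd (lhd a b + rhd a b) c = lhd (rhd a c) b)
    (hpn4 : ∀ a b c : V, lhd (lhd a b) c = lhd (lhd a c) b)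
    (hnontrivial : ¬ (∀ a b : V, lhd a b = 0 ∧ rhd a b = 0))
    (hsimple : ∀ I : Submodule ℂ V,
        (∀ a ∈ I, ∀ b : V, lhd a b ∈ I ∧ lhd b a ∈ I ∧ rhd a b ∈ I ∧ rhd b a ∈ I) →
        I = ⊥ ∨ I = ⊤) :
    ¬ (∀ a b : V, rhd a b = - lhd b a) := by
  intro h
  -- Key identity 1, from hpn3 under skewness
  have key1 : ∀ a b c : V, lhd (lhd c a) b = lhd c (lhd a b) - lhd c (lhd b a) := by
    intro a b c
    have h3 := hpn3 a b c
    simp only [h, map_add, map_neg, map_sub, LinearMap.add_apply, LinearMap.neg_apply,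
      LinearMap.sub_apply, neg_neg] at h3
    linear_combination (norm := module) h3
  -- Key identity 2: (c◁a)◁b = 0, from hpn1 under skewness
  have key2 : ∀ a b c : V, lhd (lhd c a) b = 0 := by
    intro a b c
    have h1 := hpn1 a b c
    simp only [h, map_add, map_neg, map_sub, LinearMap.add_apply, LinearMap.neg_apply,
      LinearMap.sub_apply, neg_neg] at h1
    have h4 : lhd (lhd c b) a = lhd (lhd c a) b := hpn4 c b a
    have k1 := key1 a b c
    have two : (2 : ℂ) • lhd (lhd c a) b = 0 := by
      linear_combination (norm := module) h1 - h4 + 2 • k1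
    have := smul_eq_zero.mp two
    simpa using this
  -- The span of all products is an ideal
  set I : Submodule ℂ V := Submodule.span ℂ (Set.range fun p : V × V => lhd p.1 p.2) with hI
  have memI : ∀ a b : V, lhd a b ∈ I := fun a b =>
    Submodule.subset_span ⟨(a, b), rfl⟩
  have hideal : ∀ a ∈ I, ∀ b : V, lhd a b ∈ I ∧ lhd b a ∈ I ∧ rhd a b ∈ I ∧ rhd b a ∈ I := by
    intro a _ b
    refine ⟨memI a b, memI b a, ?_, ?_⟩
    · rw [h]; exact neg_mem (memI b a)
    · rw [h]; exact neg_mem (memI a b)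
  have hzero : ∀ a b : V, lhd a b = 0 := by
    rcases hsimple I hideal with hbot | htop
    · intro a b
      have := memI a b
      rw [hbot] at this
      simpa using this
    · intro a b
      have ha : a ∈ I := htop ▸ Submodule.mem_top
      induction ha using Submodule.span_induction with
      | mem x hx =>
        obtain ⟨⟨p, q⟩, rfl⟩ := hx
        exact key2 q b p
      | zero => simp
      | add x y _ _ hx hy => simp [map_add, hx, hy]
      | smul c x _ hx => simp [map_smul, hx]
  exact hnontrivial fun a b => ⟨hzero a b, by rw [h, hzero, neg_zero]⟩
end

section
/- If (V, ◁, ▷) is a pre-Novikov algebra satisfying a▷b = −b◁a for all a, b ∈ V, then ((c◁b)◁a = 0 for all a, b, c ∈ V, i.e. (V◁V)◁V = 0. -/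
/-- If a pre-Novikov algebra satisfies a▷b = −b◁a for all a, b,
    then (V◁V)◁V = 0. -/
theorem preNovikov_skew_implies_lhd_sq_zero
    {V : Type*} [AddCommGroup V] [Module ℂ V]
    (lhd rhd : V →ₗ[ℂ] V →ₗ[ℂ] V)
    (hpn1 : ∀ a b c : V, rhd a (rhd b c)
        = rhd (rhd a b + lhd a b) c + rhd b (rhd a c) - rhd (rhd b a + lhd b a) c)
    (hpn2 : ∀ a b c : V, rhd a (lhd b c)
        = lhd (rhd a b) c + lhd b (lhd a c + rhd a c) - lhd (lhd b a) c)
    (hpn3 : ∀ a b c : V, rhd (lhd a b + rhd a b) c = lhd (rhd a c) b)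
    (hpn4 : ∀ a b c : V, lhd (lhd a b) c = lhd (lhd a c) b)
    (hskew : ∀ a b : V, rhd a b = - lhd b a) :
    ∀ a b c : V, lhd (lhd c b) a = 0 := by
  have star : ∀ a b c : V,
      lhd c (lhd a b) - lhd c (lhd b a) = lhd (lhd c a) b := by
    intro a b c
    have h := hpn3 a b c
    simp only [hskew, map_add, map_neg, LinearMap.neg_apply, LinearMap.add_apply, neg_neg] at h
    rw [← neg_inj, neg_sub, sub_eq_neg_add]
    exact h
  intro a b c
  have h1 := star a b c
  have h2 := star b a c
  have h3 := hpn4 c b a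
  have key : (2 : ℂ) • lhd (lhd c b) a = 0 := by
    have : lhd (lhd c a) b + lhd (lhd c b) a = 0 := by
      rw [← h1, ← h2]; abel
    rw [two_smul]
    rw [← h3] at this
    exact this
  have := smul_eq_zero.mp key
  simpa using this
end

section
/- Let (V, ·, ∘) be a Novikov-Poisson algebra and suppose t ∈ V satisfies b·t = 0 and b∘t = −t∘b for all b ∈ V. Then W := t∘V = {t∘b : b ∈ V} is an ideal of the Novikov-Poisson algebra (V, ·, ∘): for all b, d ∈ V, (t∘b)∘d ∈ W, d∘(t∘b) ∈ W, and (t∘b)·d = d·(t∘b) = 0. -/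
/-- In a Novikov-Poisson algebra, if t satisfies b·t = 0 and b∘t = −t∘b for
    all b, then W = t∘V is an ideal: (t∘b)∘d ∈ W, d∘(t∘b) ∈ W and
    (t∘b)·d = d·(t∘b) = 0. -/
theorem NovikovPoisson_tcirc_ideal
    {V : Type*} [AddCommGroup V] [Module ℂ V]
    (mul circ : V →ₗ[ℂ] V →ₗ[ℂ] V)
    (hcomm : ∀ a b : V, mul a b = mul b a)
    (hassoc : ∀ a b c : V, mul (mul a b) c = mul a (mul b c))
    (hls : ∀ a b c : V, circ (circ a b) c - circ a (circ b c)
        = circ (circ b a) c - circ b (circ a c))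
    (hrc : ∀ a b c : V, circ (circ a b) c = circ (circ a c) b)
    (hnp1 : ∀ a b c : V, circ (mul a b) c = mul a (circ b c))
    (hnp2 : ∀ a b c : V, mul (circ a b) c - circ a (mul b c)
        = mul (circ b a) c - circ b (mul a c))
    (t : V)
    (ht1 : ∀ b : V, mul b t = 0)
    (ht2 : ∀ b : V, circ b t = - circ t b) :
    ∀ b d : V,
      circ (circ t b) d ∈ Set.range (fun e => circ t e) ∧
      circ d (circ t b) ∈ Set.range (fun e => circ t e) ∧
      mul (circ t b) d = 0 ∧ mul d (circ t b) = 0 := by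
  -- (t∘b)∘c = t∘(b∘c)
  have hA : ∀ b c : V, circ (circ t b) c = circ t (circ b c) := by
    intro b c
    have h := hrc b t c
    rw [ht2 b, ht2 (circ b c), map_neg, LinearMap.neg_apply] at h
    exact neg_injective h
  -- d∘(t∘b) = -(t∘(d∘b))
  have hB : ∀ b d : V, circ d (circ t b) = -(circ t (circ d b)) := by
    intro b d
    have h := hls t d b
    rw [hA d b, sub_self, ht2 d, map_neg, LinearMap.neg_apply, hA d b] at h
    -- h : 0 = -(circ t (circ d b)) - circ d (circ t b)
    have h2 := sub_eq_zero.mp h.symm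
    exact h2.symm
  -- t∘(b·c) = b·(t∘c)
  have hkey : ∀ b c : V, circ t (mul b c) = mul b (circ t c) := by
    intro b c
    have h := hnp1 b c t
    rw [ht2 (mul b c), ht2 c, map_neg] at h
    exact neg_injective h
  -- (t∘b)·c + (t∘b)·c = t∘(b·c)
  have hdouble : ∀ b c : V, mul (circ t b) c + mul (circ t b) c = circ t (mul b c) := by
    intro b c
    have h := hnp2 t b c
    rw [ht2 b, hcomm t c, ht1 c, map_zero, map_neg, LinearMap.neg_apply, sub_zero] at h
    -- h : mul (circ t b) c - circ t (mul b c) = -(mul (circ t b) c)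
    exact add_eq_of_eq_neg_add (sub_eq_iff_eq_add.mp h)
  -- (t∘b)·c = 0
  have hmul0 : ∀ b c : V, mul (circ t b) c = 0 := by
    intro b c
    have h1 : mul (circ t b) c + mul (circ t b) c = mul (circ t c) b := by
      rw [hdouble b c, hkey b c, hcomm b (circ t c)]
    have h2 : mul (circ t c) b + mul (circ t c) b = mul (circ t b) c := by
      rw [hdouble c b, hkey c b, hcomm c (circ t b)]
    set X := mul (circ t b) c with hX
    set Z := mul (circ t c) b with hZ
    have h5 : X + X + X + X = X := by
      rw [show X + X + X + X = (X + X) + (X + X) by abel, h1, h2]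
    have h4 : X + X + X = 0 := by
      have h6 : X + X + X + X = 0 + X := by rw [zero_add]; exact h5
      exact add_right_cancel h6
    have h3 : (3 : ℂ) • X = 0 := by
      rw [show (3 : ℂ) = 1 + 1 + 1 by norm_num, add_smul, add_smul, one_smul]
      exact h4
    exact (smul_eq_zero.mp h3).resolve_left (by norm_num)
  intro b d
  refine ⟨⟨circ b d, (hA b d).symm⟩, ⟨-(circ d b), ?_⟩, hmul0 b d, by
    rw [hcomm d (circ t b)]; exact hmul0 b d⟩
  simp only [map_neg]
  exact (hB b d).symm
end

section
/- Let (V, ◁, ▷) be a pre-Novikov algebra, β ∈ ℂ nonzero, and suppose bilinear forms α₀, α₁, α₂, α₃ : V × V → ℂ satisfy, for all a,b,c ∈ V (writing a∗b = a◁b + a▷b and a⋆b = a▷b + b◁a): α₃(a∗b,c) = α₃(b∗a,c) = α₃(a,c◁b) = α₃(b,a▷c); α₂(a∗b,c) − α₂(a,c◁b) − βα₃(a,c◁b) = 0; 2α₂(a∗b,c) − α₂(b∗a,c) − α₂(a,b⋆c) = 0; α₁(a∗b,c) − α₁(a,c◁b) − βα₂(a,c◁b) = 0; α₁(a∗b,c)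 − α₁(b∗a,c) − α₁(a,b⋆c) + α₁(b,a⋆c) = 0; α₀(a∗b,c) − α₀(a,c◁b) + α₀(b,a⋆c) − βα₁(a,c◁b) = 0; βα₀(a,c◁b) = βα₀(b,c◁a). If there exists e ∈ V with a∗e = a and a◁e = a for all a ∈ V, then α₃ = α₂ = 0, α₁(a,c) = (1/β)α₀(e, a⋆c), and α₀(a,c) = α₀(e, c◁a) for all a, c ∈ V. -/
/-- For a pre-Novikov algebra with a right unit e (for ∗ and ◁) and β ≠ 0,
    any 2-cocycle data (α₀, α₁, α₂, α₃) satisfies α₃ = α₂ = 0,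
    α₁(a,c) = (1/β)α₀(e, a⋆c) and α₀(a,c) = α₀(e, c◁a). -/
theorem preNovikov_right_unit_cocycle
    {V : Type*} [AddCommGroup V] [Module ℂ V]
    (lhd rhd : V →ₗ[ℂ] V →ₗ[ℂ] V)
    (hpn1 : ∀ a b c : V, rhd a (rhd b c)
        = rhd (rhd a b + lhd a b) c + rhd b (rhd a c) - rhd (rhd b a + lhd b a) c)
    (hpn2 : ∀ a b c : V, rhd a (lhd b c)
        = lhd (rhd a b) c + lhd b (lhd a c + rhd a c) - lhd (lhd b a) c)
    (hpn3 : ∀ a b c : V, rhd (lhd a b + rhd a b) c = lhd (rhd a c) b)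
    (hpn4 : ∀ a b c : V, lhd (lhd a b) c = lhd (lhd a c) b)
    (s st : V → V → V)
    (hs : ∀ a b : V, s a b = lhd a b + rhd a b)
    (hst : ∀ a b : V, st a b = rhd a b + lhd b a)
    (β : ℂ) (hβ : β ≠ 0)
    (α₀ α₁ α₂ α₃ : V →ₗ[ℂ] V →ₗ[ℂ] ℂ)
    (h3a : ∀ a b c : V, α₃ (s a b) c = α₃ (s b a) c)
    (h3b : ∀ a b c : V, α₃ (s a b) c = α₃ a (lhd c b))
    (h3c : ∀ a b c : V, α₃ (s a b) c = α₃ b (rhd a c))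
    (h2a : ∀ a b c : V, α₂ (s a b) c - α₂ a (lhd c b) - β * α₃ a (lhd c b) = 0)
    (h2b : ∀ a b c : V, 2 * α₂ (s a b) c - α₂ (s b a) c - α₂ a (st b c) = 0)
    (h1a : ∀ a b c : V, α₁ (s a b) c - α₁ a (lhd c b) - β * α₂ a (lhd c b) = 0)
    (h1b : ∀ a b c : V, α₁ (s a b) c - α₁ (s b a) c - α₁ a (st b c) + α₁ b (st a c) = 0)
    (h0a : ∀ a b c : V, α₀ (s a b) c - α₀ a (lhd c b) + α₀ b (st a c)
        - β * α₁ a (lhd c b) = 0)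
    (h0b : ∀ a b c : V, β * α₀ a (lhd c b) = β * α₀ b (lhd c a))
    (e : V)
    (he1 : ∀ a : V, s a e = a)
    (he2 : ∀ a : V, lhd a e = a) :
    α₃ = 0 ∧ α₂ = 0 ∧
    (∀ a c : V, α₁ a c = (1 / β) * α₀ e (st a c)) ∧
    (∀ a c : V, α₀ a c = α₀ e (lhd c a)) := by
  refine ⟨?_, ?_, ?_, ?_⟩
  · ext a c
    have h := h2a a e c
    rw [he1, he2] at h
    have h' : β * α₃ a c = 0 := by linear_combination -h
    simpa using (mul_eq_zero.mp h').resolve_left hβ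
  · ext a c
    have h := h1a a e c
    rw [he1, he2] at h
    have h' : β * α₂ a c = 0 := by linear_combination -h
    simpa using (mul_eq_zero.mp h').resolve_left hβ
  · intro a c
    have h := h0a a e c
    rw [he1, he2] at h
    field_simp
    linear_combination -h
  · intro a c
    have h := h0b a e c
    rw [he2] at h
    exact mul_left_cancel₀ hβ h
end

section
/- Let V = ⊕_{i∈ℤ} ℂxᵢ and suppose bilinear forms α₀, α₁, α₂ : V × V → ℂ satisfy for all i,j,k ∈ ℤ: α₂(xᵢ, x_{j+k}) = α₂(x_{i+j}, x_k) = α₂(x_j, x_{i+k}); α₂(x_{i+j}, x_k) = α₁(x_{i+j}, x_k) − α₁(xᵢ, x_{j+k}); α₁(x_j, x_{i+k}) = α₁(xᵢ, x_{j+k}); α₁(xᵢ, x_{j+k}) = α₀(x_{i+j}, x_k) + α₀(x_j, x_{i+k}) − α₀(xᵢ, x_{j+k}); α₀(x_j, x_{i+k}) = α₀(xᵢ, x_{j+k}). Then α₂ = 0, and there exists a function g: ℤ → ℂ with α₁(xᵢ, xⱼ) = α₀(xᵢ, xⱼ) = g(i+j) for all i, j ∈ ℤ. -/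
/-- For V = ⊕_{i∈ℤ} ℂxᵢ and bilinear forms α₀, α₁, α₂ satisfying the cocycle
    conditions of the algebra R₁, we get α₂ = 0 and α₁ = α₀ = g(i+j)
    on basis elements for some g : ℤ → ℂ. -/
theorem cocycle_R1_classification
    (α₀ α₁ α₂ : (ℤ →₀ ℂ) →ₗ[ℂ] (ℤ →₀ ℂ) →ₗ[ℂ] ℂ)
    (x : ℤ → (ℤ →₀ ℂ)) (hx : ∀ i : ℤ, x i = Finsupp.single i 1)
    (h2a : ∀ i j k : ℤ, α₂ (x i) (x (j + k)) = α₂ (x (i + j)) (x k))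
    (h2b : ∀ i j k : ℤ, α₂ (x i) (x (j + k)) = α₂ (x j) (x (i + k)))
    (h1a : ∀ i j k : ℤ, α₂ (x (i + j)) (x k) = α₁ (x (i + j)) (x k) - α₁ (x i) (x (j + k)))
    (h1b : ∀ i j k : ℤ, α₁ (x j) (x (i + k)) = α₁ (x i) (x (j + k)))
    (h0a : ∀ i j k : ℤ, α₁ (x i) (x (j + k))
        = α₀ (x (i + j)) (x k) + α₀ (x j) (x (i + k)) - α₀ (x i) (x (j + k)))
    (h0b : ∀ i j k : ℤ, α₀ (x j) (x (i + k)) = α₀ (x i) (x (j + k))) :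
    α₂ = 0 ∧ ∃ g : ℤ → ℂ, ∀ i j : ℤ,
      α₁ (x i) (x j) = g (i + j) ∧ α₀ (x i) (x j) = g (i + j) := by
  -- α₀ depends only on the sum
  have hA0 : ∀ i j : ℤ, α₀ (x i) (x j) = α₀ (x 0) (x (i + j)) := by
    intro i j
    have := h0b i 0 j
    simpa using this.symm
  -- α₁ equals the same g
  have hA1 : ∀ i j : ℤ, α₁ (x i) (x j) = α₀ (x 0) (x (i + j)) := by
    intro i j
    have := h0a i 0 j
    simp only [add_zero, zero_add] at this
    rw [this, hA0 i j]
    ring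
  -- α₂ vanishes on basis vectors
  have hA2 : ∀ i j : ℤ, α₂ (x i) (x j) = 0 := by
    intro i j
    have := h1a i 0 j
    simp only [add_zero, zero_add] at this
    rw [this]
    ring
  constructor
  · apply Finsupp.lhom_ext'
    intro i
    apply LinearMap.ext_ring
    apply Finsupp.lhom_ext'
    intro j
    apply LinearMap.ext_ring
    have := hA2 i j
    rw [hx i, hx j] at this
    simpa using this
  · exact ⟨fun n => α₀ (x 0) (x n), fun i j => ⟨hA1 i j, hA0 i j⟩⟩
end

section
/- Let V = ⊕_{i∈ℤ} ℂxᵢ and suppose bilinear forms α₀, α₁, α₂ : V × V → ℂ satisfy for all i,j,k ∈ ℤ: α₂(xᵢ, x_{j+k}) = α₂(x_{i+j}, x_k) = α₂(x_j, x_{i+k}); α₁(xᵢ, x_{j+k}) = α₁(x_{i+j}, x_k) = α₁(x_j, x_{i+k}); α₀(xᵢ, x_{j+k}) = α₀(x_{i+j}, x_k) + α₀(x_j, x_{i+k}). Then α₀ = 0, and there exist functions f, g: ℤ → ℂ with α₂(xᵢ, xⱼ) = f(i+j) and α₁(xᵢ, xⱼ) = g(i+j) for all i, j ∈ ℤ.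 -/
/-- For V = ⊕_{i∈ℤ} ℂxᵢ and bilinear forms α₀, α₁, α₂ satisfying the cocycle
    conditions of the algebra R₂, we get α₀ = 0 and α₂, α₁ depend only on
    i + j on basis elements. -/
theorem cocycle_R2_classification
    (α₀ α₁ α₂ : (ℤ →₀ ℂ) →ₗ[ℂ] (ℤ →₀ ℂ) →ₗ[ℂ] ℂ)
    (x : ℤ → (ℤ →₀ ℂ)) (hx : ∀ i : ℤ, x i = Finsupp.single i 1)
    (h2a : ∀ i j k : ℤ, α₂ (x i) (x (j + k)) = α₂ (x (i + j)) (x k))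
    (h2b : ∀ i j k : ℤ, α₂ (x i) (x (j + k)) = α₂ (x j) (x (i + k)))
    (h1a : ∀ i j k : ℤ, α₁ (x i) (x (j + k)) = α₁ (x (i + j)) (x k))
    (h1b : ∀ i j k : ℤ, α₁ (x i) (x (j + k)) = α₁ (x j) (x (i + k)))
    (h0 : ∀ i j k : ℤ, α₀ (x i) (x (j + k))
        = α₀ (x (i + j)) (x k) + α₀ (x j) (x (i + k))) :
    α₀ = 0 ∧ ∃ f g : ℤ → ℂ, ∀ i j : ℤ,
      α₂ (x i) (x j) = f (i + j) ∧ α₁ (x i) (x j) = g (i + j) := by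
  have hzero : ∀ n : ℤ, α₀ (x 0) (x n) = 0 := by
    intro n
    have h := h0 0 0 n
    simp only [zero_add, add_zero] at h
    linear_combination -h
  have hbasis : ∀ j k : ℤ, α₀ (x j) (x k) = 0 := by
    intro j k
    have h := h0 0 j k
    simp only [zero_add] at h
    have h2 := hzero (j + k)
    linear_combination (h2 - h)/2
  constructor
  · apply Finsupp.lhom_ext'
    intro i
    apply LinearMap.ext_ring
    apply Finsupp.lhom_ext'
    intro j
    apply LinearMap.ext_ring
    have := hbasis i j
    simp only [hx] at this
    simpa using this
  · refine ⟨fun n => α₂ (x 0) (x n), fun n => α₁ (x 0) (x n), fun i j => ⟨?_, ?_⟩⟩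
    · have h := h2a 0 i j
      simpa using h.symm
    · have h := h1a 0 i j
      simpa using h.symm
end

section
/- Let V = ℂL be one-dimensional with products L·L = L and L∘L = cL for a fixed c ∈ ℂ. Suppose bilinear forms α₀, α₁, α₂ : V × V → ℂ satisfy (with β = 0, writing α_i(L,L) simply as values): α₂(a·b,c) = α₂(a,c·b); α₂(a∘b,c) − α₁(a,c·b) − α₂(a,b∘c) = −α₁(a·b,c) + α₂(b∘a,c); 2α₂(a∘b,c) − α₁(a,c·b) = 2α₂(b∘a,c) − α₁(b,c·a); α₁(a∘b,c) − α₀(a,c·b) − α₁(a,b∘c) = −α₀(a·b,c) + α₁(b∘a,c) − α₀(b,c·a); α₀(a∘b,c) − α₀(a,b∘c) = α₀(b∘a,c) − α₀(b,a∘c), for all a,b,c ∈ V. Then: if c ≠ 0, α₂(L,L) = 0 and α₀(L,L) = c·α₁(L,L); if c = 0, α₀(L,L) = 0 while α₂(L,L) and α₁(L,L) are arbitrary. -/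
/-- The cocycle conditions (with β = 0) for the one-dimensional
    left-symmetric Poisson algebra ℂL with L·L = L, L∘L = cL,
    expressed on V = ℂ (with L = 1, a·b = a*b, a∘b = c*(a*b)). -/
def Cond18 (c₀ : ℂ) (α₀ α₁ α₂ : ℂ →ₗ[ℂ] ℂ →ₗ[ℂ] ℂ) : Prop :=
  (∀ a b c : ℂ, α₂ (a * b) c = α₂ a (c * b)) ∧
  (∀ a b c : ℂ, α₂ (c₀ * (a * b)) c - α₁ a (c * b) - α₂ a (c₀ * (b * c))
      = -(α₁ (a * b) c) + α₂ (c₀ * (b * a)) c) ∧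
  (∀ a b c : ℂ, 2 * α₂ (c₀ * (a * b)) c - α₁ a (c * b)
      = 2 * α₂ (c₀ * (b * a)) c - α₁ b (c * a)) ∧
  (∀ a b c : ℂ, α₁ (c₀ * (a * b)) c - α₀ a (c * b) - α₁ a (c₀ * (b * c))
      = -(α₀ (a * b) c) + α₁ (c₀ * (b * a)) c - α₀ b (c * a)) ∧
  (∀ a b c : ℂ, α₀ (c₀ * (a * b)) c - α₀ a (c₀ * (b * c))
      = α₀ (c₀ * (b * a)) c - α₀ b (c₀ * (a * c)))

/-- Central extensions of the rank-one left-symmetric conformal algebra R_c: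
    if c ≠ 0 then α₂(L,L) = 0 and α₀(L,L) = c·α₁(L,L); if c = 0 then
    α₀(L,L) = 0 while α₂(L,L), α₁(L,L) can be arbitrary. -/
theorem rank_one_central_extensions
    (c₀ : ℂ) (α₀ α₁ α₂ : ℂ →ₗ[ℂ] ℂ →ₗ[ℂ] ℂ)
    (h : Cond18 c₀ α₀ α₁ α₂) :
    (c₀ ≠ 0 → α₂ 1 1 = 0 ∧ α₀ 1 1 = c₀ * α₁ 1 1) ∧
    (c₀ = 0 → α₀ 1 1 = 0 ∧
      ∀ A B : ℂ, ∃ β₀ β₁ β₂ : ℂ →ₗ[ℂ] ℂ →ₗ[ℂ] ℂ,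
        Cond18 c₀ β₀ β₁ β₂ ∧ β₂ 1 1 = A ∧ β₁ 1 1 = B ∧ β₀ 1 1 = 0) := by
  obtain ⟨h1, h2, h3, h4, h5⟩ := h
  have e2 := h2 1 1 1
  have e4 := h4 1 1 1
  have hsm : ∀ (α : ℂ →ₗ[ℂ] ℂ →ₗ[ℂ] ℂ) (x : ℂ), α (c₀ * x) 1 = c₀ * α x 1 := by
    intro α x
    rw [show c₀ * x = c₀ • x from rfl, map_smul]; rfl
  have hsm' : ∀ (α : ℂ →ₗ[ℂ] ℂ →ₗ[ℂ] ℂ) (x : ℂ), α 1 (c₀ * x) = c₀ * α 1 x := by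
    intro α x
    rw [show c₀ * x = c₀ • x from rfl, map_smul]; rfl
  simp only [hsm, hsm'] at e2 e4
  simp only [mul_one, one_mul] at e2 e4
  have hx : c₀ * α₂ 1 1 = 0 := by linear_combination -e2
  have hz : α₀ 1 1 = c₀ * α₁ 1 1 := by linear_combination e4
  refine ⟨fun hc => ⟨?_, hz⟩, fun hc => ⟨by simp [hz, hc], ?_⟩⟩
  · exact (mul_eq_zero.mp hx).resolve_left hc
  intro A B
  refine ⟨0, B • LinearMap.mul ℂ ℂ, A • LinearMap.mul ℂ ℂ, ?_, by simp, by simp, by simp⟩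
  refine ⟨?_, ?_, ?_, ?_, ?_⟩ <;> intro a b c <;>
    simp only [hc, zero_mul, map_zero, LinearMap.zero_apply, LinearMap.smul_apply,
      LinearMap.mul_apply', smul_eq_mul] <;> ring
end
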